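/- Let γ be an axis path in ℝ^d of the form γ = r₁e_{i₁} * r₂e_{i₂} * ⋯ * rₙe_{iₙ} (concatenation of straight segments, the k-th segment being rₖ times the basis vector e_{iₖ}, rₖ ≠ 0 and i_k ≠ i_{k+1}). Then the signature coefficient of the square-free word w = e_{i₁}e_{i₂}⋯e_{iₙ} equals C(w) = r₁r₂⋯rₙ, which is nonzero. -/

import Mathlib

open scoped ENNReal Classical

/-- The approximation to the signature coefficient of the word `w` of the path
`γ : [s,t] → ℝ^d` given by the iterated Riemann–Stieltjes sum along the dyadic partition
of `[s,t]` of mesh `(t-s)/2^m`. -/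
noncomputable def dyadicSigSum (d : ℕ) (γ : ℝ → PiLp 1 fun _ : Fin d => ℝ) (s t : ℝ)
    {n : ℕ} (w : Fin n → Fin d) (m : ℕ) : ℝ :=
  ∑ j ∈ Finset.univ.filter (fun j : Fin n → Fin (2 ^ m) => StrictMono j),
    ∏ i : Fin n,
      (γ (s + (t - s) * ((j i : ℝ) + 1) / 2 ^ m) (w i) -
       γ (s + (t - s) * (j i : ℝ) / 2 ^ m) (w i))

/-- The signature coefficient `C_{s,t}(w) = ∫_{s<u₁<⋯<uₙ<t} dγ_{w₁}(u₁)⋯dγ_{wₙ}(uₙ)` of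
the word `w`, defined as the limit of iterated Riemann–Stieltjes sums along dyadic
partitions (for continuous paths of bounded variation this limit exists and is the
iterated integral over the simplex). -/
noncomputable def sigCoeff (d : ℕ) (γ : ℝ → PiLp 1 fun _ : Fin d => ℝ) (s t : ℝ)
    {n : ℕ} (w : Fin n → Fin d) : ℝ :=
  Filter.limUnder Filter.atTop (dyadicSigSum d γ s t w)

/-- The degree-`n` signature term `X^n_{s,t}(γ) ∈ (ℝ^d)^{⊗n}`, recorded by its coordinates
in the basis of words of length `n`, and normed with the `ℓ¹` norm of the coordinates:
for the `ℓ¹` norm on `ℝ^d` this is exactly the projective tensor norm on `(ℝ^d)^{⊗n}`. -/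
noncomputable def sig (d : ℕ) (γ : ℝ → PiLp 1 fun _ : Fin d => ℝ) (s t : ℝ) (n : ℕ) :
    PiLp 1 fun _ : Fin n → Fin d => ℝ :=
  WithLp.toLp 1 (fun w => sigCoeff d γ s t w)
/-- The axis path `γ = r₁e_{i₁} * ⋯ * rₙe_{iₙ}` in `ℝ^d` (with the `ℓ¹` norm),
parametrized on `[0,1]`: on the `k`-th of `n` equal subintervals it moves linearly by
`r k` in the coordinate direction `idx k`. -/
noncomputable def axisPath (d : ℕ) {n : ℕ} (idx : Fin n → Fin d) (r : Fin n → ℝ)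
    (t : ℝ) : PiLp 1 fun _ : Fin d => ℝ :=
  ∑ j : Fin n,
    (min (max ((n : ℝ) * t - (j : ℝ)) 0) 1 * r j) •
      (WithLp.toLp 1 (Pi.single (idx j) 1) : PiLp 1 fun _ : Fin d => ℝ)

/-!
The dyadic sums factor through the increments `δ k q ≥ 0` of the `n` ramp functions of the
axis path over the dyadic cells `q`: for each segment `k` they sum to `1`, each is at most
`n / 2 ^ m`, and the cells charged by a segment lie weakly left of those charged by any later
segment. Expanding the product over the letters of `w`, a strictly increasing choice of cells
can only pick up segment `i` at letter `i` (this is where square-freeness enters), so the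
`m`-th sum is `(∏ r) * T m`, where `T m` is the mass the product weights `∏ δ i (j i)` put on
strictly increasing `j`. A non-strictly-increasing `j` of positive mass repeats a cell at two
letters, and such `j` carry total mass at most `n ^ 2 * (n / 2 ^ m)`; hence `T m → 1`.
-/

open Finset Filter Topology

section OrderedSupports

variable {ι κ : Type*}

def SupportsOrdered [Preorder ι] [Preorder κ] (δ : ι → κ → ℝ) : Prop :=
  ∀ ⦃a b : ι⦄ ⦃qa qb : κ⦄, a < b → δ a qa ≠ 0 → δ b qb ≠ 0 → qa ≤ qb

theorem strictMono_of_monotone_of_ne_succ {β : Type*} [PartialOrder β] {n : ℕ}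
    {f : Fin n → β} (hf : Monotone f)
    (hne : ∀ k : Fin n, ∀ h : (k : ℕ) + 1 < n, f k ≠ f ⟨(k : ℕ) + 1, h⟩) : StrictMono f := by
  intro a b hab
  have ha : (a : ℕ) + 1 < n := by omega
  have hsucc : f a < f ⟨(a : ℕ) + 1, ha⟩ :=
    (hf (Fin.mk_le_mk.2 (by omega) : a ≤ ⟨(a : ℕ) + 1, ha⟩)).lt_of_ne (hne a ha)
  exact hsucc.trans_le (hf (Fin.mk_le_mk.2 (by omega)))

theorem SupportsOrdered.monotone [PartialOrder ι] [Preorder κ] {ν : Type*} [LinearOrder ν]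
    {δ : ν → κ → ℝ} (hδ : SupportsOrdered δ) {j : ι → κ} (hj : StrictMono j) {p : ι → ν}
    (hp : ∀ i, δ (p i) (j i) ≠ 0) : Monotone p :=
  monotone_iff_forall_lt.2 fun a b hab =>
    not_lt.1 fun hba => (hj hab).not_ge (hδ hba (hp b) (hp a))

/-- Expanding the product, the ordered supports force every surviving choice of segments
`p` to be monotone, and square-freeness of `idx` then makes it strictly monotone, i.e. `id`. -/
theorem SupportsOrdered.prod_sum_ite_eq [Preorder κ] {n : ℕ} {α : Type*} [DecidableEq α]
    {δ : Fin n → κ → ℝ} (hδ : SupportsOrdered δ) {idx : Fin n → α}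
    (hsf : ∀ k : Fin n, ∀ h : (k : ℕ) + 1 < n, idx k ≠ idx ⟨(k : ℕ) + 1, h⟩)
    (r : Fin n → ℝ) {j : Fin n → κ} (hj : StrictMono j) :
    ∏ i, ∑ k, (if idx k = idx i then δ k (j i) * r k else 0) =
      (∏ i, δ i (j i)) * ∏ i, r i := by
  rw [Fintype.prod_sum, Fintype.sum_eq_single id]
  · simp [prod_mul_distrib]
  · intro p hp
    by_contra hne
    have hterm : ∀ i, idx (p i) = idx i ∧ δ (p i) (j i) ≠ 0 := fun i => by
      have hi := prod_ne_zero_iff.1 hne i (mem_univ i)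
      split_ifs at hi with h
      · exact ⟨h, left_ne_zero_of_mul hi⟩
      · exact absurd rfl hi
    have hmono : Monotone p := hδ.monotone hj fun i => (hterm i).2
    refine hp (strictMono_of_monotone_of_ne_succ hmono fun k hk heq => hsf k hk ?_).eq_id
    rw [← (hterm k).1, heq, (hterm _).1]

variable [Fintype ι] [DecidableEq ι] [Fintype κ] {δ : ι → κ → ℝ}

theorem sum_prod_eq_one (h1 : ∀ i, ∑ q, δ i q = 1) : ∑ j : ι → κ, ∏ i, δ i (j i) = 1 := by
  rw [← Fintype.prod_sum]
  simp [h1]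

theorem sum_prod_filter_strictMono_le_one [Preorder ι] [Preorder κ]
    [DecidablePred (StrictMono : (ι → κ) → Prop)] (h0 : ∀ i q, 0 ≤ δ i q)
    (h1 : ∀ i, ∑ q, δ i q = 1) :
    ∑ j ∈ univ.filter (fun j : ι → κ => StrictMono j), ∏ i, δ i (j i) ≤ 1 :=
  (sum_le_sum_of_subset_of_nonneg (filter_subset _ _) fun j _ _ =>
    prod_nonneg fun i _ => h0 i (j i)).trans_eq (sum_prod_eq_one h1)

variable [DecidableEq κ]

theorem sum_prod_filter_apply_eq_le (h0 : ∀ i q, 0 ≤ δ i q) (h1 : ∀ i, ∑ q, δ i q = 1)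
    {a b : ι} (hab : a ≠ b) {ε : ℝ} (hε : ∀ q, δ a q ≤ ε) :
    ∑ j ∈ univ.filter (fun j : ι → κ => j a = j b), ∏ i, δ i (j i) ≤ ε := by
  have hfiber : ∀ q : κ, (univ.filter fun j : ι → κ => j a = j b).filter (fun j => j a = q) =
      Fintype.piFinset fun i => univ.filter fun x => i = a ∨ i = b → x = q := by
    intro q
    ext j
    simp only [mem_filter, mem_univ, true_and, Fintype.mem_piFinset, or_imp, forall_and,
      forall_eq]
    constructor
    · rintro ⟨hj, rfl⟩
      exact ⟨rfl, hj.symm⟩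
    · rintro ⟨rfl, hb⟩
      exact ⟨hb.symm, rfl⟩
  calc ∑ j ∈ univ.filter (fun j : ι → κ => j a = j b), ∏ i, δ i (j i)
      = ∑ q, δ a q * δ b q := by
        rw [← sum_fiberwise (univ.filter fun j : ι → κ => j a = j b) (fun j => j a)
          (fun j => ∏ i, δ i (j i))]
        refine sum_congr rfl fun q _ => ?_
        rw [hfiber, ← prod_univ_sum]
        rw [prod_eq_mul_of_mem a b (mem_univ a) (mem_univ b) hab fun i _ hi => by
          simp [hi.1, hi.2, h1]]
        simp [hab.symm, sum_filter]
    _ ≤ ∑ q, ε * δ b q := sum_le_sum fun q _ => mul_le_mul_of_nonneg_right (hε q) (h0 b q)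
    _ = ε := by rw [← mul_sum, h1, mul_one]

variable [LinearOrder ι] [LinearOrder κ] [DecidablePred (StrictMono : (ι → κ) → Prop)]

theorem SupportsOrdered.sum_prod_filter_not_strictMono_le (hδ : SupportsOrdered δ)
    (h0 : ∀ i q, 0 ≤ δ i q) (h1 : ∀ i, ∑ q, δ i q = 1) {ε : ℝ} (hε : ∀ i q, δ i q ≤ ε) :
    ∑ j ∈ univ.filter (fun j : ι → κ => ¬StrictMono j), ∏ i, δ i (j i) ≤
      Fintype.card ι ^ 2 * ε := by
  set f : (ι → κ) → ℝ := fun j => ∏ i, δ i (j i)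
  have hf0 : ∀ j, 0 ≤ f j := fun j => prod_nonneg fun i _ => h0 i (j i)
  -- by the ordered supports, a non-strictly-monotone `j` with `f j ≠ 0` repeats a value
  have hcover : ∀ j, ¬StrictMono j →
      f j ≤ ∑ p : ι × ι, if p.1 < p.2 then (if j p.1 = j p.2 then f j else 0) else 0 := by
    intro j hj
    by_cases hfj : f j = 0
    · rw [hfj]
      exact sum_nonneg fun p _ => by split_ifs <;> simp
    have hδj : ∀ i, δ i (j i) ≠ 0 := fun i => prod_ne_zero_iff.1 hfj i (mem_univ i)
    obtain ⟨a, b, hab, hba⟩ : ∃ a b, a < b ∧ j b ≤ j a := by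
      simpa [StrictMono] using hj
    have heq : j a = j b := le_antisymm (hδ hab (hδj a) (hδj b)) hba
    refine le_trans ?_ (single_le_sum (fun p _ => ?_) (mem_univ (a, b)))
    · simp [hab, heq]
    · split_ifs <;> simp [hf0]
  have hε0 : ∀ i : ι, 0 ≤ ε := fun i => by
    obtain ⟨q, -, hq⟩ := exists_ne_zero_of_sum_ne_zero (h1 i ▸ one_ne_zero)
    exact (h0 i q).trans (hε i q)
  calc ∑ j ∈ univ.filter (fun j : ι → κ => ¬StrictMono j), f j
      ≤ ∑ j ∈ univ.filter (fun j : ι → κ => ¬StrictMono j),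
          ∑ p : ι × ι, if p.1 < p.2 then (if j p.1 = j p.2 then f j else 0) else 0 :=
        sum_le_sum fun j hj => hcover j (mem_filter.1 hj).2
    _ ≤ ∑ j : ι → κ, ∑ p : ι × ι, if p.1 < p.2 then (if j p.1 = j p.2 then f j else 0) else 0 :=
        sum_le_sum_of_subset_of_nonneg (filter_subset _ _) fun j _ _ =>
          sum_nonneg fun p _ => by split_ifs <;> simp [hf0]
    _ = ∑ p : ι × ι, if p.1 < p.2 then ∑ j ∈ univ.filter (fun j : ι → κ => j p.1 = j p.2), f j
          else 0 := by
        rw [sum_comm]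
        refine sum_congr rfl fun p _ => ?_
        split_ifs <;> simp [sum_filter]
    _ ≤ ∑ _p : ι × ι, ε := sum_le_sum fun p _ => by
        split_ifs with hp
        · exact sum_prod_filter_apply_eq_le h0 h1 hp.ne fun q => hε p.1 q
        · exact hε0 p.1
    _ = Fintype.card ι ^ 2 * ε := by simp [sq]

theorem SupportsOrdered.one_sub_le_sum_prod_filter_strictMono (hδ : SupportsOrdered δ)
    (h0 : ∀ i q, 0 ≤ δ i q) (h1 : ∀ i, ∑ q, δ i q = 1) {ε : ℝ} (hε : ∀ i q, δ i q ≤ ε) :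
    1 - Fintype.card ι ^ 2 * ε ≤
      ∑ j ∈ univ.filter (fun j : ι → κ => StrictMono j), ∏ i, δ i (j i) := by
  have := sum_filter_add_sum_filter_not univ (fun j : ι → κ => StrictMono j)
    (fun j => ∏ i, δ i (j i))
  linarith [sum_prod_eq_one h1, hδ.sum_prod_filter_not_strictMono_le h0 h1 hε]

end OrderedSupports

noncomputable def segmentProgress (n k : ℕ) (t : ℝ) : ℝ := min (max (n * t - k) 0) 1

theorem segmentProgress_mono (n k : ℕ) : Monotone (segmentProgress n k) := fun _ _ h =>
  min_le_min_right _ (max_le_max_right _ (by gcongr))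

theorem segmentProgress_sub_le (n k : ℕ) {t t' : ℝ} (h : t ≤ t') :
    segmentProgress n k t' - segmentProgress n k t ≤ n * (t' - t) := by
  have : (n : ℝ) * t ≤ n * t' := by gcongr
  unfold segmentProgress
  simp only [min_def, max_def]
  split_ifs <;> linarith

theorem segmentProgress_of_le {n k : ℕ} {t : ℝ} (h : n * t ≤ k) : segmentProgress n k t = 0 := by
  simp [segmentProgress, h]

theorem segmentProgress_of_ge {n k : ℕ} {t : ℝ} (h : k + 1 ≤ n * t) :
    segmentProgress n k t = 1 := by
  simp [segmentProgress, le_sub_iff_add_le', h]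

noncomputable def dyadicIncrement (n m k q : ℕ) : ℝ :=
  segmentProgress n k ((q + 1) / 2 ^ m) - segmentProgress n k (q / 2 ^ m)

theorem dyadicIncrement_nonneg (n m k q : ℕ) : 0 ≤ dyadicIncrement n m k q :=
  sub_nonneg.2 (segmentProgress_mono n k (by gcongr; linarith))

theorem dyadicIncrement_le (n m k q : ℕ) : dyadicIncrement n m k q ≤ n / 2 ^ m :=
  (segmentProgress_sub_le n k (by gcongr; linarith)).trans_eq (by field_simp; ring)

theorem sum_dyadicIncrement {n k : ℕ} (hk : k < n) (m : ℕ) :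
    ∑ q : Fin (2 ^ m), dyadicIncrement n m k q = 1 := by
  rw [Fin.sum_univ_eq_sum_range (dyadicIncrement n m k)]
  have htel := sum_range_sub (fun q : ℕ => segmentProgress n k (q / 2 ^ m)) (2 ^ m)
  push_cast at htel
  rw [div_self (by positivity), segmentProgress_of_ge (by simp; exact_mod_cast hk),
    segmentProgress_of_le (by simp)] at htel
  simpa [dyadicIncrement] using htel

theorem dyadicIncrement_ne_zero {n m k q : ℕ} (h : dyadicIncrement n m k q ≠ 0) :
    n * q < (k + 1) * 2 ^ m ∧ k * 2 ^ m < n * (q + 1) := by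
  have h2 : (0 : ℝ) < 2 ^ m := by positivity
  constructor
  · by_contra! hq
    have hq' : ((k : ℝ) + 1) * 2 ^ m ≤ n * q := by exact_mod_cast hq
    refine h (sub_eq_zero.2 ?_)
    rw [segmentProgress_of_ge, segmentProgress_of_ge] <;>
      rw [← mul_div_assoc, le_div_iff₀ h2] <;> nlinarith
  · by_contra! hq
    have hq' : (n : ℝ) * (q + 1) ≤ k * 2 ^ m := by exact_mod_cast hq
    refine h (sub_eq_zero.2 ?_)
    rw [segmentProgress_of_le, segmentProgress_of_le] <;>
      rw [← mul_div_assoc, div_le_iff₀ h2] <;> nlinarith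

theorem supportsOrdered_dyadicIncrement (n m : ℕ) :
    SupportsOrdered fun (k : Fin n) (q : Fin (2 ^ m)) => dyadicIncrement n m k q := by
  intro a b qa qb hab ha hb
  have hqa := (dyadicIncrement_ne_zero ha).1
  have hqb := (dyadicIncrement_ne_zero hb).2
  have hab' : ((a : ℕ) + 1) * 2 ^ m ≤ b * 2 ^ m := Nat.mul_le_mul_right _ hab
  exact Fin.le_def.2 (Nat.lt_succ_iff.1
    (Nat.lt_of_mul_lt_mul_left (show n * qa < n * (qb + 1) by omega)))

theorem axisPath_apply (d : ℕ) {n : ℕ} (idx : Fin n → Fin d) (r : Fin n → ℝ) (t : ℝ)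
    (c : Fin d) :
    axisPath d idx r t c = ∑ k, if idx k = c then segmentProgress n k t * r k else 0 := by
  simp [axisPath, segmentProgress, Pi.single_apply, eq_comm]

theorem axisPath_sub_axisPath_apply (d : ℕ) {n : ℕ} (idx : Fin n → Fin d) (r : Fin n → ℝ)
    (m q : ℕ) (c : Fin d) :
    axisPath d idx r ((q + 1) / 2 ^ m) c - axisPath d idx r (q / 2 ^ m) c =
      ∑ k, if idx k = c then dyadicIncrement n m k q * r k else 0 := by
  rw [axisPath_apply, axisPath_apply, ← sum_sub_distrib]
  refine sum_congr rfl fun k _ => ?_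
  split_ifs <;> simp [dyadicIncrement, sub_mul]

theorem dyadicSigSum_axisPath (d : ℕ) {n : ℕ} (idx : Fin n → Fin d) (r : Fin n → ℝ)
    (hsf : ∀ k : Fin n, ∀ h : (k : ℕ) + 1 < n, idx k ≠ idx ⟨(k : ℕ) + 1, h⟩) (m : ℕ) :
    dyadicSigSum d (axisPath d idx r) 0 1 idx m = (∏ k, r k) *
      ∑ j ∈ univ.filter (fun j : Fin n → Fin (2 ^ m) => StrictMono j),
        ∏ i : Fin n, dyadicIncrement n m i (j i) := by
  rw [dyadicSigSum, mul_sum]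
  refine sum_congr rfl fun j hj => ?_
  simp only [zero_add, sub_zero, one_mul, axisPath_sub_axisPath_apply]
  rw [(supportsOrdered_dyadicIncrement n m).prod_sum_ite_eq hsf r (mem_filter.1 hj).2, mul_comm]

theorem tendsto_sum_prod_dyadicIncrement (n : ℕ) :
    Tendsto (fun m => ∑ j ∈ univ.filter (fun j : Fin n → Fin (2 ^ m) => StrictMono j),
      ∏ i : Fin n, dyadicIncrement n m i (j i)) atTop (𝓝 1) := by
  have h0 (m : ℕ) (i : Fin n) (q : Fin (2 ^ m)) := dyadicIncrement_nonneg n m i q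
  have h1 (m : ℕ) (i : Fin n) := sum_dyadicIncrement i.isLt m
  have hlower : Tendsto (fun m : ℕ => 1 - n ^ 2 * ((n : ℝ) / 2 ^ m)) atTop (𝓝 1) := by
    simpa using tendsto_const_nhds.sub <| (tendsto_const_nhds.div_atTop
      (tendsto_pow_atTop_atTop_of_one_lt one_lt_two)).const_mul ((n : ℝ) ^ 2)
  refine tendsto_of_tendsto_of_tendsto_of_le_of_le hlower tendsto_const_nhds (fun m => ?_)
    fun m => sum_prod_filter_strictMono_le_one (h0 m) (h1 m)
  simpa using (supportsOrdered_dyadicIncrement n m).one_sub_le_sum_prod_filter_strictMono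
    (h0 m) (h1 m) fun i q => dyadicIncrement_le n m i q

/-- For a reduced axis path `γ = r₁e_{i₁} * ⋯ * rₙe_{iₙ}` (all `rₖ ≠ 0`, consecutive
directions distinct), the signature coefficient of the square-free shape word
`w = e_{i₁}⋯e_{iₙ}` is `C(w) = r₁⋯rₙ ≠ 0`. -/
theorem axisPath_shape_coeff (d : ℕ) {n : ℕ} (idx : Fin n → Fin d) (r : Fin n → ℝ)
    (hr : ∀ k, r k ≠ 0)
    (hsf : ∀ k : Fin n, ∀ h : (k : ℕ) + 1 < n, idx k ≠ idx ⟨(k : ℕ) + 1, h⟩) :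
    sigCoeff d (axisPath d idx r) 0 1 idx = ∏ k : Fin n, r k ∧
    sigCoeff d (axisPath d idx r) 0 1 idx ≠ 0 := by
  have hlim : Tendsto (dyadicSigSum d (axisPath d idx r) 0 1 idx) atTop (𝓝 (∏ k, r k)) := by
    simpa only [mul_one, ← dyadicSigSum_axisPath d idx r hsf] using
      (tendsto_sum_prod_dyadicIncrement n).const_mul (∏ k, r k)
  rw [sigCoeff, hlim.limUnder_eq]
  exact ⟨rfl, prod_ne_zero_iff.2 fun k _ => hr k⟩
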